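/- arXiv:2201.05021 — 6 statements merged into one kernel-verified Lean document; each statement's English description precedes it below -/
import Mathlib

section
/- A schedule s is conflict serializable if and only if the conflict graph CG(s) (whose nodes are transactions and with an edge from T_i to T_j whenever some operation of T_i conflicts with an operation of T_j and the dependency b_i →_s a_j holds) is acyclic. -/
/-! ## A framework for multiversion schedules over workloads of transactions.

A transaction is a finite list of operations (each on a tuple, with a read set
and a write set of attributes), implicitly followed by a commit.  A workload
assigns to every transaction (element of `Txn`) its list of operations. -/

/-- An operation on a tuple, reading the attributes in `rs` and writing those in `ws`. -/
structure Oper (Tuple Attr : Type) where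
  tuple : Tuple
  rs : Finset Attr
  ws : Finset Attr

/-- A set of transactions: every transaction `T : Txn` is the sequence `prog T`
of its operations (its commit is implicit, as a separate event). -/
structure Workload (Tuple Attr Txn : Type) where
  prog : Txn → List (Oper Tuple Attr)

namespace Workload

variable {Tuple Attr Txn : Type} [DecidableEq Attr]

/-- The operations occurring in the workload: the `i`-th operation of transaction `T`. -/
def Op (W : Workload Tuple Attr Txn) : Type :=
  Σ T : Txn, Fin (W.prog T).length

namespace Op

variable {W : Workload Tuple Attr Txn}

def oper (a : W.Op) : Oper Tuple Attr := (W.prog a.1).get a.2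
def tuple (a : W.Op) : Tuple := a.oper.tuple
def rs (a : W.Op) : Finset Attr := a.oper.rs
def ws (a : W.Op) : Finset Attr := a.oper.ws

end Op

/-- ww-conflict: both operations write a common attribute of the same tuple. -/
def wwConflict {W : Workload Tuple Attr Txn} (b a : W.Op) : Prop :=
  b.tuple = a.tuple ∧ b.1 ≠ a.1 ∧ (b.ws ∩ a.ws).Nonempty

/-- wr-conflict. -/
def wrConflict {W : Workload Tuple Attr Txn} (b a : W.Op) : Prop :=
  b.tuple = a.tuple ∧ b.1 ≠ a.1 ∧ (b.ws ∩ a.rs).Nonempty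

/-- rw-conflict. -/
def rwConflict {W : Workload Tuple Attr Txn} (b a : W.Op) : Prop :=
  b.tuple = a.tuple ∧ b.1 ≠ a.1 ∧ (b.rs ∩ a.ws).Nonempty

def conflict {W : Workload Tuple Attr Txn} (b a : W.Op) : Prop :=
  wwConflict b a ∨ wrConflict b a ∨ rwConflict b a

/-- The events of a schedule: operations and commits (the initial write `op₀` is
represented implicitly, as the `none` value of the version function). -/
inductive Event (W : Workload Tuple Attr Txn) where
  | op : W.Op → Event W
  | commit : Txn → Event W

/-- A multiversion schedule over the workload `W`: a total order `lt` (i.e. `<ₛ`) on events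
extending the order of each transaction and placing each commit after the operations of
its transaction, a version function `version` (`none` standing for the initial write `op₀`)
and a version order `vlt` (i.e. `≪ₛ`) on the write operations on each tuple. -/
structure Schedule (W : Workload Tuple Attr Txn) where
  lt : Event W → Event W → Prop
  lt_irrefl : ∀ e, ¬ lt e e
  lt_trans : ∀ {e f g}, lt e f → lt f g → lt e g
  lt_total : ∀ e f, e = f ∨ lt e f ∨ lt f e
  prog_order : ∀ a b : W.Op, a.1 = b.1 →
    ((a.2 : ℕ) < (b.2 : ℕ) ↔ lt (Event.op a) (Event.op b))
  commit_after : ∀ a : W.Op, lt (Event.op a) (Event.commit a.1)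
  version : W.Op → Option W.Op
  version_write : ∀ a w, version a = some w →
    w.tuple = a.tuple ∧ w.ws.Nonempty ∧ w ≠ a ∧ lt (Event.op w) (Event.op a)
  vlt : W.Op → W.Op → Prop
  vlt_write : ∀ {a b}, vlt a b → a.tuple = b.tuple ∧ a.ws.Nonempty ∧ b.ws.Nonempty
  vlt_irrefl : ∀ a, ¬ vlt a a
  vlt_trans : ∀ {a b c}, vlt a b → vlt b c → vlt a c
  vlt_total : ∀ a b : W.Op, a.tuple = b.tuple → a.ws.Nonempty → b.ws.Nonempty →
    a = b ∨ vlt a b ∨ vlt b a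

namespace Schedule

variable {W : Workload Tuple Attr Txn}

/-- `≪ₛ` extended to `op₀` (`none`), which precedes every write. -/
def vlt0 (s : Schedule W) : Option W.Op → W.Op → Prop
  | none, _ => True
  | some w, a => s.vlt w a

/-- The dependency relation `b →ₛ a` between conflicting operations. -/
def dep (s : Schedule W) (b a : W.Op) : Prop :=
  (wwConflict b a ∧ s.vlt b a) ∨
  (wrConflict b a ∧ (s.version a = some b ∨ ∃ w, s.version a = some w ∧ s.vlt b w)) ∨
  (rwConflict b a ∧ s.vlt0 (s.version b) a)

/-- Single version schedule: the version order coincides with `<ₛ` and every read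
observes the last written version. -/
def SingleVersion (s : Schedule W) : Prop :=
  (∀ a b : W.Op, a.tuple = b.tuple → a.ws.Nonempty → b.ws.Nonempty →
      (s.vlt a b ↔ s.lt (Event.op a) (Event.op b))) ∧
  (∀ a c : W.Op, a.rs.Nonempty → c.tuple = a.tuple → c.ws.Nonempty →
      s.lt (Event.op c) (Event.op a) →
      ¬ (s.version a = none ∨ ∃ w, s.version a = some w ∧ s.lt (Event.op w) (Event.op c)))

/-- Serial schedule: transactions are not interleaved. -/
def Serial (s : Schedule W) : Prop :=
  ∀ a b c : W.Op, s.lt (Event.op a) (Event.op b) → s.lt (Event.op b) (Event.op c) →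
    a.1 = c.1 → a.1 = b.1

end Schedule

/-- Two schedules over the same set of transactions are conflict equivalent if they
agree on the dependencies between all pairs of conflicting operations. -/
def ConflictEquiv {W : Workload Tuple Attr Txn} (s s' : Schedule W) : Prop :=
  ∀ b a : W.Op, conflict b a → (s.dep b a ↔ s'.dep b a)

/-- A schedule is conflict serializable if it is conflict equivalent to a
single version serial schedule. -/
def Schedule.ConflictSerializable {W : Workload Tuple Attr Txn} (s : Schedule W) : Prop :=
  ∃ s' : Schedule W, s'.SingleVersion ∧ s'.Serial ∧ ConflictEquiv s s'

/-- Edges of the conflict graph of a schedule: there is an edge from `T` to `T'`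
if some operation of `T` conflicts with an operation of `T'` and the dependency holds. -/
def Schedule.cgEdge {W : Workload Tuple Attr Txn} (s : Schedule W) (T T' : Txn) : Prop :=
  ∃ b a : W.Op, b.1 = T ∧ a.1 = T' ∧ conflict b a ∧ s.dep b a

end Workload

/-! Dependencies in a single-version schedule point forward in time, and in a serial schedule
"some operation of `T` precedes some operation of `T'`" is a strict order on transactions; so a
serial single-version schedule has an acyclic conflict graph, and conflict equivalence does not
change the conflict graph.

Conversely, extend the acyclic conflict graph to a linear order on transactions (Szpilrajn) and
run the transactions serially in that order, every read seeing the last preceding write. On each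
conflicting pair the dependency holds in at least one direction, and in both schedules every
dependency goes forward in the linear order; hence the two schedules have the same dependencies. -/

theorem Relation.exists_linearOrder_of_acyclic {α : Type*} {r : α → α → Prop}
    (h : ∀ a, ¬ TransGen r a a) : ∃ _ : LinearOrder α, ∀ a b, r a b → a < b := by
  let _ : PartialOrder α :=
    { le := ReflTransGen r
      le_refl := fun _ => .refl
      le_trans := fun _ _ _ => ReflTransGen.trans
      le_antisymm := fun a b hab hba => by
        rcases reflTransGen_iff_eq_or_transGen.mp hab with rfl | hab
        · rfl
        · exact absurd (hab.trans_left hba) (h a) }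
  refine ⟨(inferInstance : LinearOrder (LinearExtension α)), fun a b hab => ?_⟩
  refine lt_of_le_of_ne (toLinearExtension.monotone (ReflTransGen.single hab)) ?_
  rintro (rfl : a = b)
  exact h a (TransGen.single hab)

namespace Workload

variable {Tuple Attr Txn : Type} {W : Workload Tuple Attr Txn}

open Event Relation Finset

namespace Schedule

lemma Serial.lt_of_lt_of_fst_eq {s : Schedule W} (hser : s.Serial) {b a a' : W.Op}
    (h : s.lt (op b) (op a)) (hn : b.1 ≠ a.1) (ha : a'.1 = a.1) : s.lt (op b) (op a') := by
  rcases s.lt_total (op b) (op a') with he | h' | h'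
  · exact absurd ((congrArg Sigma.fst (op.inj he)).trans ha) hn
  · exact h'
  · exact absurd ((hser a' b a h' h ha).symm.trans ha) hn

def Precedes (s : Schedule W) (T T' : Txn) : Prop :=
  T ≠ T' ∧ ∃ b a : W.Op, b.1 = T ∧ a.1 = T' ∧ s.lt (op b) (op a)

lemma Serial.precedes_trans {s : Schedule W} (hser : s.Serial) {T T' T'' : Txn}
    (h : s.Precedes T T') (h' : s.Precedes T' T'') : s.Precedes T T'' := by
  obtain ⟨hne, b, a, rfl, rfl, hba⟩ := h
  obtain ⟨-, b', a'', hb', rfl, hba''⟩ := h'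
  have hbb' : s.lt (op b) (op b') := hser.lt_of_lt_of_fst_eq hba hne hb'
  exact ⟨fun he => hne ((hser b b' a'' hbb' hba'' he).trans hb'), b, a'', rfl, rfl,
    s.lt_trans hbb' hba''⟩

end Schedule

section Dependencies

variable [DecidableEq Attr]

lemma wwConflict_comm {b a : W.Op} : wwConflict b a ↔ wwConflict a b := by
  unfold wwConflict; rw [eq_comm, ne_comm, inter_comm]

lemma rwConflict_comm {b a : W.Op} : rwConflict b a ↔ wrConflict a b := by
  unfold rwConflict wrConflict; rw [eq_comm, ne_comm, inter_comm]

lemma conflict_comm {b a : W.Op} : conflict b a ↔ conflict a b := by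
  simp only [conflict, wwConflict_comm (b := b), rwConflict_comm, or_comm]

lemma conflict.fst_ne {b a : W.Op} (h : conflict b a) : b.1 ≠ a.1 := by
  rcases h with ⟨-, h, -⟩ | ⟨-, h, -⟩ | ⟨-, h, -⟩ <;> exact h

namespace Schedule

lemma dep_or_dep_of_wwConflict (s : Schedule W) {b a : W.Op} (h : wwConflict b a) :
    s.dep b a ∨ s.dep a b := by
  have ⟨ht, hn, hs⟩ := h
  rcases s.vlt_total b a ht (hs.mono inter_subset_left) (hs.mono inter_subset_right)
    with rfl | hv | hv
  · exact absurd rfl hn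
  · exact .inl (.inl ⟨h, hv⟩)
  · exact .inr (.inl ⟨wwConflict_comm.mp h, hv⟩)

lemma dep_or_dep_of_wrConflict (s : Schedule W) {b a : W.Op} (h : wrConflict b a) :
    s.dep b a ∨ s.dep a b := by
  have hrw : rwConflict a b := rwConflict_comm.mpr h
  cases hva : s.version a with
  | none => exact .inr (.inr (.inr ⟨hrw, by rw [hva]; trivial⟩))
  | some w =>
    obtain ⟨hwt, hww, -, -⟩ := s.version_write a w hva
    rcases s.vlt_total b w (h.1.trans hwt.symm) (h.2.2.mono inter_subset_left) hww
      with rfl | hv | hv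
    · exact .inl (.inr (.inl ⟨h, .inl hva⟩))
    · exact .inl (.inr (.inl ⟨h, .inr ⟨w, hva, hv⟩⟩))
    · exact .inr (.inr (.inr ⟨hrw, by rw [hva]; exact hv⟩))

lemma dep_or_dep_of_conflict (s : Schedule W) {b a : W.Op} (h : conflict b a) :
    s.dep b a ∨ s.dep a b := by
  rcases h with h | h | h
  · exact s.dep_or_dep_of_wwConflict h
  · exact s.dep_or_dep_of_wrConflict h
  · exact (s.dep_or_dep_of_wrConflict (rwConflict_comm.mp h)).symm

lemma SingleVersion.lt_of_dep {s : Schedule W} (hsv : s.SingleVersion) {b a : W.Op}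
    (hd : s.dep b a) (hn : b.1 ≠ a.1) : s.lt (op b) (op a) := by
  rcases hd with ⟨⟨ht, -, hs⟩, hv⟩ | ⟨⟨ht, -, hs⟩, hv⟩ | ⟨⟨ht, -, hs⟩, hv⟩
  · exact (hsv.1 b a ht (hs.mono inter_subset_left) (hs.mono inter_subset_right)).mp hv
  · rcases hv with hv | ⟨w, hw, hv⟩
    · exact (s.version_write a b hv).2.2.2
    · obtain ⟨hwt, hww, -, hlt⟩ := s.version_write a w hw
      exact s.lt_trans ((hsv.1 b w (ht.trans hwt.symm) (hs.mono inter_subset_left) hww).mp hv) hlt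
  · -- were `a` before `b`, then `b` would read `a` or a later version, not one `≪ₛ a`
    rcases s.lt_total (op b) (op a) with he | h | h
    · exact absurd (congrArg Sigma.fst (op.inj he)) hn
    · exact h
    · have haw := hs.mono inter_subset_right
      refine absurd ?_ (hsv.2 b a (hs.mono inter_subset_left) ht.symm haw h)
      cases hvb : s.version b with
      | none => exact .inl rfl
      | some w =>
        rw [hvb] at hv
        obtain ⟨hwt, hww, -, -⟩ := s.version_write b w hvb
        exact .inr ⟨w, rfl, (hsv.1 w a (hwt.trans ht) hww haw).mp hv⟩

lemma SingleVersion.precedes_of_cgEdge {s : Schedule W} (hsv : s.SingleVersion) {T T' : Txn}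
    (h : s.cgEdge T T') : s.Precedes T T' := by
  obtain ⟨b, a, rfl, rfl, hc, hd⟩ := h
  exact ⟨hc.fst_ne, b, a, rfl, rfl, hsv.lt_of_dep hd hc.fst_ne⟩

lemma Serial.precedes_of_transGen_cgEdge {s : Schedule W} (hser : s.Serial)
    (hsv : s.SingleVersion) {T T' : Txn} (h : TransGen s.cgEdge T T') : s.Precedes T T' := by
  induction h with
  | single h => exact hsv.precedes_of_cgEdge h
  | tail _ h ih => exact hser.precedes_trans ih (hsv.precedes_of_cgEdge h)

theorem Serial.not_transGen_cgEdge {s : Schedule W} (hser : s.Serial) (hsv : s.SingleVersion)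
    (T : Txn) : ¬ TransGen s.cgEdge T T :=
  fun h => (hser.precedes_of_transGen_cgEdge hsv h).1 rfl

end Schedule

lemma ConflictEquiv.cgEdge_eq {s s' : Schedule W} (h : ConflictEquiv s s') :
    s.cgEdge = s'.cgEdge := by
  ext T T'
  exact exists₂_congr fun b a =>
    and_congr_right' <| and_congr_right' <| and_congr_right (h b a)

lemma conflictEquiv_of_forall_cgEdge_lt [Preorder Txn] {s s' : Schedule W}
    (hs : ∀ T T', s.cgEdge T T' → T < T') (hs' : ∀ T T', s'.cgEdge T T' → T < T') :
    ConflictEquiv s s' := by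
  have transfer {s₁ s₂ : Schedule W} (h₁ : ∀ T T', s₁.cgEdge T T' → T < T')
      (h₂ : ∀ T T', s₂.cgEdge T T' → T < T') {b a : W.Op} (hc : conflict b a)
      (hd : s₁.dep b a) : s₂.dep b a :=
    (s₂.dep_or_dep_of_conflict hc).resolve_right fun hd' =>
      (h₁ _ _ ⟨b, a, rfl, rfl, hc, hd⟩).asymm
        (h₂ _ _ ⟨a, b, rfl, rfl, conflict_comm.mp hc, hd'⟩)
  exact fun b a hc => ⟨transfer hs hs' hc, transfer hs' hs hc⟩

end Dependencies

section SerialSchedule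

noncomputable instance [Fintype Txn] : Fintype W.Op :=
  inferInstanceAs (Fintype (Σ T : Txn, Fin (W.prog T).length))

def serialKey : Event W → Txn ×ₗ ℕ
  | op a => toLex (a.1, a.2)
  | commit T => toLex (T, (W.prog T).length)

lemma serialKey_injective : Function.Injective (serialKey (W := W)) := by
  rintro (⟨T, i⟩ | T) (⟨T', j⟩ | T') h <;>
    simp only [serialKey, toLex_inj, Prod.mk.injEq] at h
  · obtain ⟨rfl, hij⟩ := h
    rw [Fin.ext hij]
  · obtain ⟨rfl, hi⟩ := h
    exact absurd hi i.isLt.ne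
  · obtain ⟨rfl, hj⟩ := h
    exact absurd hj.symm j.isLt.ne
  · rw [h.1]

variable [LinearOrder Txn]

lemma eq_or_serialKey_lt_or_gt (e f : Event W) :
    e = f ∨ serialKey e < serialKey f ∨ serialKey f < serialKey e := by
  rcases lt_trichotomy (serialKey e) (serialKey f) with h | h | h
  · exact .inr (.inl h)
  · exact .inl (serialKey_injective h)
  · exact .inr (.inr h)

variable [Fintype Txn]

open Classical in
noncomputable def writesBefore (a : W.Op) : Finset W.Op :=
  {w | w.tuple = a.tuple ∧ w.ws.Nonempty ∧ serialKey (op w) < serialKey (op a)}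

lemma mem_writesBefore {a w : W.Op} :
    w ∈ writesBefore a ↔
      w.tuple = a.tuple ∧ w.ws.Nonempty ∧ serialKey (op w) < serialKey (op a) := by
  simp [writesBefore]

noncomputable def lastWriteBefore (a : W.Op) : Option W.Op :=
  if h : (writesBefore a).Nonempty then
    some ((writesBefore a).exists_max_image (fun w => serialKey (op w)) h).choose
  else none

lemma lastWriteBefore_mem {a g : W.Op} (h : lastWriteBefore a = some g) :
    g ∈ writesBefore a := by
  unfold lastWriteBefore at h
  split_ifs at h with hne
  obtain rfl := Option.some.inj h
  exact ((writesBefore a).exists_max_image _ hne).choose_spec.1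

lemma exists_lastWriteBefore_ge {a w : W.Op} (hw : w ∈ writesBefore a) :
    ∃ g, lastWriteBefore a = some g ∧ serialKey (op w) ≤ serialKey (op g) := by
  have hne : (writesBefore a).Nonempty := ⟨w, hw⟩
  exact ⟨_, dif_pos hne,
    ((writesBefore a).exists_max_image (fun w => serialKey (op w)) hne).choose_spec.2 w hw⟩

variable (W) in
noncomputable def serialSchedule : Schedule W where
  lt e f := serialKey e < serialKey f
  lt_irrefl e := lt_irrefl (serialKey e)
  lt_trans := lt_trans
  lt_total := eq_or_serialKey_lt_or_gt
  prog_order a b h := by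
    simp only [serialKey, Prod.Lex.toLex_lt_toLex, h, lt_irrefl, true_and, false_or]
  commit_after a := Prod.Lex.toLex_lt_toLex.mpr (.inr ⟨rfl, a.2.isLt⟩)
  version := lastWriteBefore
  version_write a w h := by
    obtain ⟨ht, hws, hlt⟩ := mem_writesBefore.mp (lastWriteBefore_mem h)
    exact ⟨ht, hws, by rintro rfl; exact lt_irrefl _ hlt, hlt⟩
  vlt x y := x.tuple = y.tuple ∧ x.ws.Nonempty ∧ y.ws.Nonempty ∧
    serialKey (op x) < serialKey (op y)
  vlt_write h := ⟨h.1, h.2.1, h.2.2.1⟩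
  vlt_irrefl x h := lt_irrefl _ h.2.2.2
  vlt_trans h₁ h₂ :=
    ⟨h₁.1.trans h₂.1, h₁.2.1, h₂.2.2.1, h₁.2.2.2.trans h₂.2.2.2⟩
  vlt_total a b ht ha hb := by
    rcases eq_or_serialKey_lt_or_gt (op a) (op b) with h | h | h
    · exact .inl (op.inj h)
    · exact .inr (.inl ⟨ht, ha, hb, h⟩)
    · exact .inr (.inr ⟨ht.symm, hb, ha, h⟩)

lemma serialSchedule_singleVersion : (serialSchedule W).SingleVersion := by
  refine ⟨fun a b ht ha hb => ⟨fun h => h.2.2.2, fun h => ⟨ht, ha, hb, h⟩⟩, ?_⟩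
  intro a c _ hct hc hca
  obtain ⟨g, hg, hcg⟩ := exists_lastWriteBefore_ge (mem_writesBefore.mpr ⟨hct, hc, hca⟩)
  change ¬ (lastWriteBefore a = none ∨
    ∃ w, lastWriteBefore a = some w ∧ serialKey (op w) < serialKey (op c))
  rw [hg]
  rintro (h | ⟨w, h, hwc⟩)
  · cases h
  · obtain rfl := Option.some.inj h
    exact (hwc.trans_le hcg).false

lemma fst_le_of_serialSchedule_lt {a b : W.Op} (h : (serialSchedule W).lt (op a) (op b)) :
    a.1 ≤ b.1 :=
  Prod.Lex.monotone_fst _ _ h.le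

lemma serialSchedule_serial : (serialSchedule W).Serial := fun _ _ _ hab hbc hac =>
  le_antisymm (fst_le_of_serialSchedule_lt hab) (hac ▸ fst_le_of_serialSchedule_lt hbc)

lemma serialSchedule_cgEdge_lt [DecidableEq Attr] {T T' : Txn}
    (h : (serialSchedule W).cgEdge T T') : T < T' := by
  obtain ⟨b, a, rfl, rfl, hc, hd⟩ := h
  exact (fst_le_of_serialSchedule_lt
    (serialSchedule_singleVersion.lt_of_dep hd hc.fst_ne)).lt_of_ne hc.fst_ne

end SerialSchedule

end Workload

open Workload in
/-- A schedule `s` is conflict serializable iff its conflict graph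
is acyclic. -/
theorem conflictSerializable_iff_acyclic_conflictGraph
    {Tuple Attr Txn : Type} [DecidableEq Attr] [Fintype Txn]
    (W : Workload Tuple Attr Txn) (s : Schedule W) :
    s.ConflictSerializable ↔ ∀ T : Txn, ¬ Relation.TransGen s.cgEdge T T := by
  constructor
  · rintro ⟨s', hsv, hser, hequiv⟩
    rw [hequiv.cgEdge_eq]
    exact hser.not_transGen_cgEdge hsv
  · intro hacyclic
    obtain ⟨_, hlt⟩ := Relation.exists_linearOrder_of_acyclic hacyclic
    exact ⟨serialSchedule W, serialSchedule_singleVersion, serialSchedule_serial,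
      conflictEquiv_of_forall_cgEdge_lt hlt fun _ _ => serialSchedule_cgEdge_lt⟩
end

section
/- Let (Rels, Funcs) be a schema admitting the multi-tree bijectivity partitioning into pairs (f_i,g_i) as above. For every directed path in SG(Rels, Funcs) visiting nodes R_1, R_2, ..., R_{m-1}, R_m with R_1 = R_m and R_1 ≠ R_i for all 2 ≤ i ≤ m−1, it holds that R_2 = R_{m-1}, and moreover the edge f from R_1 to R_2 and the edge g from R_{m-1} to R_m form a pair (f, g) of the partitioning. -/
/-- A relational schema: relation names and function names with a domain and a range.
Its schema graph is the directed multigraph with nodes the relation names and an edge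
labelled `f` from `dom f` to `rng f` for every function name `f`. -/
structure Schema where
  Rel : Type
  Func : Type
  dom : Func → Rel
  rng : Func → Rel

/-- Directed paths in the schema graph: `IsPath S R F T` holds if `F` is the sequence of
edge labels of a directed path from node `R` to node `T`. -/
inductive IsPath (S : Schema) : S.Rel → List S.Func → S.Rel → Prop
  | nil (R : S.Rel) : IsPath S R [] R
  | cons {R T : S.Rel} {f : S.Func} {F : List S.Func} :
      S.dom f = R → IsPath S (S.rng f) F T → IsPath S R (f :: F) T

/-- The schema graph restricted to the edges in `H` is a multi-tree: there is at most one
directed path (using only edges in `H`) between any two nodes. -/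
def MultiTreeOn (S : Schema) (H : Set S.Func) : Prop :=
  ∀ (R T : S.Rel) (F F' : List S.Func),
    IsPath S R F T → IsPath S R F' T →
    (∀ f ∈ F, f ∈ H) → (∀ f ∈ F', f ∈ H) → F = F'

/-- A disjoint partitioning of the function names into pairs `(f, pair f)` with inverse
domains and ranges, given as a fixed-point free involution. -/
structure Pairing (S : Schema) where
  pair : S.Func → S.Func
  pair_invol : ∀ f, pair (pair f) = f
  pair_ne : ∀ f, pair f ≠ f
  dom_pair : ∀ f, S.dom (pair f) = S.rng f
  rng_pair : ∀ f, S.rng (pair f) = S.dom f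

/-- Every choice of one function name from each pair yields a multi-tree. -/
def Pairing.MultiTreeCond {S : Schema} (pr : Pairing S) : Prop :=
  ∀ H : Set S.Func, (∀ f, f ∈ H ↔ pr.pair f ∉ H) → MultiTreeOn S H

/-- The sequence of nodes `R₁, R₂, …, Rₘ` visited by a path with edge labels `F`
starting at `R`. -/
def pathNodes (S : Schema) : S.Rel → List S.Func → List S.Rel
  | R, [] => [R]
  | R, f :: F => R :: pathNodes S (S.rng f) F

/-!
A closed walk using no edge together with its pair lies inside one selection of a function
from each pair, so the multi-tree condition forces it to be empty. Hence every nonempty closed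
walk without a backtrack `f, pair f` would contain some `f` and later `pair f`, and the part in
between is a shorter closed walk without backtrack; by induction there is none at all. Now take
a cycle through `R` that visits `R` only at its ends, and a backtrack `a, pair a` in it. Both
ends of the backtrack are the same node; if some edge of the cycle precedes or follows the
backtrack, this node is an interior node and so differs from `R`, and then deleting the
backtrack leaves a shorter such cycle with the same first and last edge. Otherwise the cycle is
exactly `a, pair a`.
-/

theorem Function.Involutive.exists_transversal_superset {α : Type*} {σ : α → α}
    (hσ : Function.Involutive σ) (hfix : ∀ a, σ a ≠ a) {s : Set α} (hs : ∀ a ∈ s, σ a ∉ s) :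
    ∃ H : Set α, (∀ a, a ∈ H ↔ σ a ∉ H) ∧ s ⊆ H := by
  let : LinearOrder α := IsWellOrder.linearOrder WellOrderingRel
  refine ⟨{a | a ∈ s ∨ (σ a ∉ s ∧ a < σ a)}, fun a => ?_, fun a ha => Or.inl ha⟩
  have hsa := hs a
  have hsσa := hs (σ a)
  simp only [Set.mem_ofPred_eq, hσ a] at hsσa ⊢
  rcases lt_trichotomy a (σ a) with h | h | h
  · grind
  · exact absurd h.symm (hfix a)
  · grind

theorem Function.Involutive.exists_eq_append_cons_append_cons {α : Type*} {σ : α → α}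
    (hσ : Function.Involutive σ) (hfix : ∀ a, σ a ≠ a) {a : α} {l : List α}
    (ha : a ∈ l) (hσa : σ a ∈ l) : ∃ A x B C, l = A ++ x :: (B ++ σ x :: C) := by
  obtain ⟨A, A', rfl⟩ := List.append_of_mem ha
  rcases List.mem_append.1 hσa with hA | hA'
  · obtain ⟨P, Q, rfl⟩ := List.append_of_mem hA
    exact ⟨P, σ a, Q, A', by simp [hσ a]⟩
  · rcases List.mem_cons.1 hA' with he | hA'
    · exact absurd he (hfix a)
    · obtain ⟨B, C, rfl⟩ := List.append_of_mem hA'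
      exact ⟨A, a, B, C, by simp⟩

namespace IsPath

variable {S : Schema} {X Y : S.Rel}

@[simp]
theorem nil_iff : IsPath S X [] Y ↔ X = Y :=
  ⟨fun h => by cases h; rfl, fun h => h ▸ .nil X⟩

@[simp]
theorem cons_iff {f : S.Func} {F : List S.Func} :
    IsPath S X (f :: F) Y ↔ S.dom f = X ∧ IsPath S (S.rng f) F Y :=
  ⟨fun h => by cases h with | cons hd ht => exact ⟨hd, ht⟩, fun h => .cons h.1 h.2⟩

theorem append_iff {A B : List S.Func} :
    IsPath S X (A ++ B) Y ↔ ∃ Z, IsPath S X A Z ∧ IsPath S Z B Y := by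
  induction A generalizing X with
  | nil => simp
  | cons a A ih => simp [ih, and_assoc]

theorem append {Z : S.Rel} {A B : List S.Func} (hA : IsPath S X A Z) (hB : IsPath S Z B Y) :
    IsPath S X (A ++ B) Y :=
  append_iff.2 ⟨Z, hA, hB⟩

theorem rng_getLast {F : List S.Func} (hp : IsPath S X F Y) (hF : F ≠ []) :
    S.rng (F.getLast hF) = Y := by
  rw [← List.dropLast_append_getLast hF, append_iff] at hp
  obtain ⟨_, -, hlast⟩ := hp
  exact nil_iff.1 (cons_iff.1 hlast).2

end IsPath

theorem pathNodes_eq_cons_map (S : Schema) (R : S.Rel) (F : List S.Func) :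
    pathNodes S R F = R :: F.map S.rng := by
  induction F generalizing R with
  | nil => rfl
  | cons f F ih => simp [pathNodes, ih]

namespace Pairing

variable {S : Schema} (pr : Pairing S)

theorem involutive : Function.Involutive pr.pair :=
  pr.pair_invol

def IsReduced (F : List S.Func) : Prop :=
  F.IsChain fun a b => b ≠ pr.pair a

variable {pr}

theorem exists_eq_append_cons_cons_of_not_isReduced {F : List S.Func} (hF : ¬ pr.IsReduced F) :
    ∃ A a C, F = A ++ a :: pr.pair a :: C := by
  simp only [IsReduced, List.isChain_iff_forall_rel_of_append_cons_cons] at hF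
  push Not at hF
  obtain ⟨a, _, A, C, rfl, rfl⟩ := hF
  exact ⟨A, a, C, rfl⟩

theorem MultiTreeCond.eq_nil_of_isReduced (h : pr.MultiTreeCond) {X : S.Rel}
    {F : List S.Func} (hp : IsPath S X F X) (hF : pr.IsReduced F) : F = [] := by
  by_cases hc : ∃ f ∈ F, pr.pair f ∈ F
  · exfalso
    obtain ⟨f, hf, hpf⟩ := hc
    obtain ⟨A, x, B, C, hFeq⟩ := pr.involutive.exists_eq_append_cons_append_cons pr.pair_ne hf hpf
    rw [hFeq] at hp hF
    have hB : IsPath S (S.rng x) B (S.rng x) := by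
      obtain ⟨_, -, hxBC⟩ := IsPath.append_iff.1 hp
      obtain ⟨Y, hB, hBC⟩ := IsPath.append_iff.1 (IsPath.cons_iff.1 hxBC).2
      rwa [← (pr.dom_pair x).symm.trans (IsPath.cons_iff.1 hBC).1] at hB
    have hBred : pr.IsReduced B := hF.infix ⟨A ++ [x], pr.pair x :: C, by simp⟩
    have hBne : B ≠ [] := by
      rintro rfl
      exact List.isChain_iff_forall_rel_of_append_cons_cons.1 hF
        (show _ = A ++ x :: pr.pair x :: C by simp) rfl
    exact hBne (eq_nil_of_isReduced h hB hBred)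
  · push Not at hc
    obtain ⟨H, hH, hFH⟩ :=
      pr.involutive.exists_transversal_superset pr.pair_ne (s := {f | f ∈ F}) hc
    exact h H hH X X F [] hp (.nil X) hFH (by simp)
termination_by F.length
decreasing_by simp [hFeq]; omega

theorem MultiTreeCond.getLast_eq_pair_head (h : pr.MultiTreeCond) {R : S.Rel}
    {F : List S.Func} (hp : IsPath S R F R) (hF : F ≠ [])
    (hmid : ∀ f ∈ F.dropLast, S.rng f ≠ R) : F.getLast hF = pr.pair (F.head hF) := by
  obtain ⟨A, a, C, rfl⟩ := exists_eq_append_cons_cons_of_not_isReduced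
    fun hred => hF (h.eq_nil_of_isReduced hp hred)
  obtain ⟨Z, hA, hZ, hC⟩ : ∃ Z, IsPath S R A Z ∧ S.dom a = Z ∧ IsPath S Z C R := by
    simpa [IsPath.append_iff, pr.dom_pair, pr.rng_pair] using hp
  have hZR : A ≠ [] ∨ C ≠ [] → Z ≠ R := by
    rintro (hA' | hC') rfl
    · exact hmid (A.getLast hA') (by simp [List.dropLast_append_of_ne_nil, List.getLast_mem])
        (hA.rng_getLast hA')
    · exact hmid (pr.pair a)
        (by simp [List.dropLast_append_of_ne_nil, List.dropLast_cons_of_ne_nil hC'])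
        (by rw [pr.rng_pair, hZ])
  by_cases hAC : A = [] ∧ C = []
  · obtain ⟨rfl, rfl⟩ := hAC
    simp
  have hA' : A ≠ [] := fun hA' => hZR (by tauto) (IsPath.nil_iff.1 (hA' ▸ hA)).symm
  have hC' : C ≠ [] := fun hC' => hZR (by tauto) (IsPath.nil_iff.1 (hC' ▸ hC))
  have hmid' : ∀ f ∈ (A ++ C).dropLast, S.rng f ≠ R := fun f hf => hmid f <| by
    simp only [List.dropLast_append_of_ne_nil, List.dropLast_cons_of_ne_nil, hC', ne_eq,
      List.mem_append, List.mem_cons, not_false_eq_true, reduceCtorEq] at hf ⊢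
    tauto
  have := h.getLast_eq_pair_head (hA.append hC) (by simp [hA']) hmid'
  simpa [hA', hC', List.getLast_append_of_right_ne_nil, List.head_append_of_ne_nil] using this
termination_by F.length

end Pairing

/-- For a schema admitting a multi-tree bijectivity partitioning: on
every directed path visiting nodes `R₁,…,Rₘ` with `R₁ = Rₘ` and `R₁ ≠ Rᵢ` for all
`2 ≤ i ≤ m−1`, we have `R₂ = R_{m−1}`, and the first edge `f` (from `R₁` to `R₂`) and the
last edge `g` (from `R_{m−1}` to `Rₘ`) form a pair `(f, g)` of the partitioning. -/
theorem first_last_edge_paired_of_cycle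
    (S : Schema) (pr : Pairing S) (h : pr.MultiTreeCond)
    (R : S.Rel) (F : List S.Func) (hF : F ≠ []) (hp : IsPath S R F R)
    (hmid : ∀ X ∈ ((pathNodes S R F).drop 1).dropLast, X ≠ R) :
    S.rng (F.head hF) = S.dom (F.getLast hF) ∧ F.getLast hF = pr.pair (F.head hF) := by
  have hlast : F.getLast hF = pr.pair (F.head hF) := by
    refine h.getLast_eq_pair_head hp hF fun f hf => hmid (S.rng f) ?_
    rw [pathNodes_eq_cons_map, List.drop_one, List.tail_cons, ← List.map_dropLast]
    exact List.mem_map_of_mem hf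
  exact ⟨by rw [hlast, pr.dom_pair], hlast⟩
end

section
/- For a set of templates P admitting multi-tree bijectivity and a sequence of potentially conflicting quadruples D over P, cross-template variable implication is symmetric: X ⇒_D Y (X implies Y in D by some sequence of function names) if and only if Y ⇒_D X. -/
/-- A transaction template: a sequence of operations over typed variables (with read and
write sets of attributes), together with equality constraints `X = f(Y)` (represented as
the triple `(X, f, Y) ∈ eqC`) and disequality constraints `X ≠ Y` ( `(X, Y) ∈ neqC` ). -/
structure Template (S : Schema) (Var Attr : Type) where
  varType : Var → S.Rel
  ops : List (Var × Finset Attr × Finset Attr)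
  eqC : Set (Var × S.Func × Var)
  neqC : Set (Var × Var)
  eq_typed : ∀ c ∈ eqC, varType c.1 = S.rng c.2.1 ∧ varType c.2.2 = S.dom c.2.1
  neq_typed : ∀ c ∈ neqC, varType c.1 = varType c.2

/-- Intra-template variable implication: `X ⇒^F_τ Y`, generated by `X ⇒^ε_τ X` and, for a
constraint `Y = f(Z)` of the template, `X ⇒^{F}_τ Z → X ⇒^{F·f}_τ Y`. -/
inductive Template.Implies {S : Schema} {Var Attr : Type}
    (τ : Template S Var Attr) : Var → List S.Func → Var → Prop
  | refl (X : Var) : Implies τ X [] X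
  | step {X Z Y : Var} {F : List S.Func} {f : S.Func} :
      Implies τ X F Z → (Y, f, Z) ∈ τ.eqC → Implies τ X (F ++ [f]) Y

/-- The constraints of a template are closed under the inverse pairs:
`Y = f(X)` is a constraint iff `X = (pair f)(Y)` is. -/
def Template.ClosedUnderPairing {S : Schema} {Var Attr : Type}
    (τ : Template S Var Attr) (pr : Pairing S) : Prop :=
  ∀ (X Y : Var) (f : S.Func), (Y, f, X) ∈ τ.eqC ↔ (X, pr.pair f, Y) ∈ τ.eqC

/-- Operations `o` of `τi` and `p` of `τj` are potentially conflicting: they are over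
variables of the same type and their attribute sets intersect appropriately
(ww, wr, or rw). -/
def PotConf {S : Schema} {Var Attr : Type} [DecidableEq Attr]
    (τi τj : Template S Var Attr) (o p : Var × Finset Attr × Finset Attr) : Prop :=
  τi.varType o.1 = τj.varType p.1 ∧
  ((o.2.2 ∩ p.2.2).Nonempty ∨ (o.2.2 ∩ p.2.1).Nonempty ∨ (o.2.1 ∩ p.2.2).Nonempty)

/-- A sequence of potentially conflicting quadruples `(τ_i, o_i, p_j, τ_j)` over an
indexed family of (variable-disjoint copies of) templates: a quadruple `(i, k, l, j)`
relates the `k`-th operation of `tmpl i` to the `l`-th operation of `tmpl j`, which must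
be potentially conflicting. -/
structure PCSeq (S : Schema) (Var Attr : Type) [DecidableEq Attr] where
  m : ℕ
  tmpl : Fin m → Template S Var Attr
  quads : List (Fin m × ℕ × ℕ × Fin m)
  wf : ∀ q ∈ quads, ∃ o p, (tmpl q.1).ops[q.2.1]? = some o ∧
      (tmpl q.2.2.2).ops[q.2.2.1]? = some p ∧ PotConf (tmpl q.1) (tmpl q.2.2.2) o p

namespace PCSeq

variable {S : Schema} {Var Attr : Type} [DecidableEq Attr]

/-- Cross-template variable implication `X ⇒^F_D Y` (variables are tagged with the index
of the template of `D` in which they occur). -/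
inductive ImpliesD (D : PCSeq S Var Attr) :
    (Fin D.m × Var) → List S.Func → (Fin D.m × Var) → Prop
  | intra {i : Fin D.m} {X Y : Var} {F : List S.Func} :
      (D.tmpl i).Implies X F Y → ImpliesD D (i, X) F (i, Y)
  | cross {q} {o p : Var × Finset Attr × Finset Attr} : q ∈ D.quads →
      (D.tmpl q.1).ops[q.2.1]? = some o →
      (D.tmpl q.2.2.2).ops[q.2.2.1]? = some p →
      ImpliesD D (q.1, o.1) [] (q.2.2.2, p.1)
  | cross' {q} {o p : Var × Finset Attr × Finset Attr} : q ∈ D.quads →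
      (D.tmpl q.1).ops[q.2.1]? = some o →
      (D.tmpl q.2.2.2).ops[q.2.2.1]? = some p →
      ImpliesD D (q.2.2.2, p.1) [] (q.1, o.1)
  | trans {x z y F₁ F₂} :
      ImpliesD D x F₁ z → ImpliesD D z F₂ y → ImpliesD D x (F₁ ++ F₂) y

/-- Connectedness of variables in `D`: `X ≈_D Y`. -/
inductive ConnD (D : PCSeq S Var Attr) : (Fin D.m × Var) → (Fin D.m × Var) → Prop
  | base {x y} : (∃ F, D.ImpliesD x F y) ∨ (∃ F, D.ImpliesD y F x) → ConnD D x y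
  | ext {x z y} : ConnD D x z →
      (∃ F, D.ImpliesD z F y) ∨ (∃ F, D.ImpliesD y F z) → ConnD D x y

/-- `D` is over a set of templates admitting multi-tree bijectivity. -/
def MTB (D : PCSeq S Var Attr) (pr : Pairing S) : Prop :=
  pr.MultiTreeCond ∧ ∀ i, (D.tmpl i).ClosedUnderPairing pr

/-- The type of a (tagged) variable occurrence. -/
def vt (D : PCSeq S Var Attr) (x : Fin D.m × Var) : S.Rel := (D.tmpl x.1).varType x.2

end PCSeq

/-! Closure under pairing reverses every equality-constraint step `Y = f(Z)` into `Z = (pair f)(Y)`,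
and the quadruple steps are symmetric by construction. Hence a derivation of `X ⇒^F_D Y` reverses
into one of `Y ⇒^G_D X`, where `G` is `F` read backwards with every function name replaced by its
pair. -/

namespace Template

variable {S : Schema} {Var Attr : Type} {τ : Template S Var Attr}

theorem Implies.append {X Z Y : Var} {F G : List S.Func}
    (hXZ : τ.Implies X F Z) (hZY : τ.Implies Z G Y) : τ.Implies X (F ++ G) Y := by
  induction hZY with
  | refl => simpa using hXZ
  | step _ hc ih => simpa only [List.append_assoc] using ih.step hc

theorem Implies.reverse_map_pair {pr : Pairing S} (hτ : τ.ClosedUnderPairing pr)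
    {X Y : Var} {F : List S.Func} (h : τ.Implies X F Y) :
    τ.Implies Y (F.reverse.map pr.pair) X := by
  induction h with
  | refl => exact .refl _
  | @step Z Y _ f _ hc ih =>
    have hinv : τ.Implies Y [pr.pair f] Z := (Implies.refl Y).step ((hτ Z Y f).mp hc)
    simpa using hinv.append ih

end Template

namespace PCSeq

variable {S : Schema} {Var Attr : Type} [DecidableEq Attr] {D : PCSeq S Var Attr}

theorem ImpliesD.reverse_map_pair {pr : Pairing S}
    (hD : ∀ i, (D.tmpl i).ClosedUnderPairing pr) {x y : Fin D.m × Var} {F : List S.Func}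
    (h : D.ImpliesD x F y) : D.ImpliesD y (F.reverse.map pr.pair) x := by
  induction h with
  | intra hi => exact .intra (hi.reverse_map_pair (hD _))
  | cross hq ho hp => exact .cross' hq ho hp
  | cross' hq ho hp => exact .cross hq ho hp
  | trans _ _ ih₁ ih₂ => simpa using ih₂.trans ih₁

end PCSeq

/-- For a sequence of potentially conflicting quadruples `D` over a set
of templates admitting multi-tree bijectivity, cross-template variable implication is
symmetric: `X ⇒_D Y` iff `Y ⇒_D X`. -/
theorem impliesD_symm
    {S : Schema} {Var Attr : Type} [DecidableEq Attr]
    (D : PCSeq S Var Attr) (pr : Pairing S) (h : D.MTB pr)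
    (x y : Fin D.m × Var) :
    (∃ F, D.ImpliesD x F y) ↔ (∃ F, D.ImpliesD y F x) := by
  constructor <;> exact fun ⟨_, hF⟩ => ⟨_, hF.reverse_map_pair h.2⟩
end

section
/- Equivalent variables are assigned the same tuple: for a variable mapping μ̄ for a sequence of potentially conflicting quadruples D over a set of templates P, admissible for some database, if X ≡_D Y then μ̄(X) = μ̄(Y). -/
/-- A database over a schema: typed tuples and an interpretation of the function names. -/
structure DB (S : Schema) (Tuple : Type) where
  typeOf : Tuple → S.Rel
  interp : S.Func → Tuple → Tuple
  interp_typed : ∀ f t, typeOf (interp f t) = S.rng f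

/-- A variable assignment is admissible for a database when it is type preserving and
satisfies all equality and disequality constraints of the template. -/
def Template.Admissible {S : Schema} {Var Attr Tuple : Type}
    (τ : Template S Var Attr) (d : DB S Tuple) (μ : Var → Tuple) : Prop :=
  (∀ X : Var, d.typeOf (μ X) = τ.varType X) ∧
  (∀ c ∈ τ.eqC, μ c.1 = d.interp c.2.1 (μ c.2.2)) ∧
  (∀ c ∈ τ.neqC, μ c.1 ≠ μ c.2)

/-- A variable mapping `μ̄` for a sequence of potentially conflicting quadruples `D`
(one variable assignment per template of `D`) is admissible for a database if every
assignment is admissible for its template and the variables of the operations of each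
potentially conflicting quadruple are identified. -/
def PCSeq.AdmissibleMap {S : Schema} {Var Attr Tuple : Type} [DecidableEq Attr]
    (D : PCSeq S Var Attr) (d : DB S Tuple) (μ : Fin D.m → Var → Tuple) : Prop :=
  (∀ i, (D.tmpl i).Admissible d (μ i)) ∧
  (∀ q ∈ D.quads, ∀ o p : Var × Finset Attr × Finset Attr,
    (D.tmpl q.1).ops[q.2.1]? = some o →
    (D.tmpl q.2.2.2).ops[q.2.2.1]? = some p →
    μ q.1 o.1 = μ q.2.2.2 p.1)

/-- Equivalence of variables in `D`: the smallest relation containing reflexivity, closed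
under transitivity, and such that variables implied by equivalent variables via the same
sequence of function names are equivalent. -/
inductive PCSeq.EquivD {S : Schema} {Var Attr : Type} [DecidableEq Attr]
    (D : PCSeq S Var Attr) : (Fin D.m × Var) → (Fin D.m × Var) → Prop
  | refl (x) : EquivD D x x
  | lift {z w x y : Fin D.m × Var} {F : List S.Func} :
      EquivD D z w → D.ImpliesD z F x → D.ImpliesD w F y → EquivD D x y
  | trans {x z y} : EquivD D x z → EquivD D z y → EquivD D x y

/-! If `Z ⇒^F_D X`, an admissible mapping sends `X` to the tuple obtained from that of `Z`
by applying the database functions named by `F` in turn. So the `lift` rule of `≡_D` turns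
equal tuples for `Z` and `W` into equal tuples for `X` and `Y`. -/

def DB.evalPath {S : Schema} {Tuple : Type} (d : DB S Tuple) (F : List S.Func)
    (t : Tuple) : Tuple :=
  F.foldl (fun t f => d.interp f t) t

namespace DB

variable {S : Schema} {Tuple : Type} (d : DB S Tuple)

@[simp]
theorem evalPath_append (F G : List S.Func) (t : Tuple) :
    d.evalPath (F ++ G) t = d.evalPath G (d.evalPath F t) :=
  List.foldl_append

@[simp]
theorem evalPath_singleton (f : S.Func) (t : Tuple) : d.evalPath [f] t = d.interp f t := rfl

end DB

theorem Template.Implies.eq_evalPath {S : Schema} {Var Attr Tuple : Type}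
    {τ : Template S Var Attr} {d : DB S Tuple} {μ : Var → Tuple} (hμ : τ.Admissible d μ)
    {X Y : Var} {F : List S.Func} (h : τ.Implies X F Y) :
    μ Y = d.evalPath F (μ X) := by
  induction h with
  | refl => rfl
  | step _ hc ih => rw [DB.evalPath_append, ← ih, DB.evalPath_singleton]; exact hμ.2.1 _ hc

theorem PCSeq.ImpliesD.eq_evalPath {S : Schema} {Var Attr Tuple : Type} [DecidableEq Attr]
    {D : PCSeq S Var Attr} {d : DB S Tuple} {μ : Fin D.m → Var → Tuple}
    (hμ : D.AdmissibleMap d μ) {x y : Fin D.m × Var} {F : List S.Func}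
    (h : D.ImpliesD x F y) :
    μ y.1 y.2 = d.evalPath F (μ x.1 x.2) := by
  induction h with
  | intra h => exact h.eq_evalPath (hμ.1 _)
  | cross hq ho hp => exact (hμ.2 _ hq _ _ ho hp).symm
  | cross' hq ho hp => exact hμ.2 _ hq _ _ ho hp
  | trans _ _ ih₁ ih₂ => rw [DB.evalPath_append, ← ih₁, ih₂]

/-- Equivalent variables are assigned the same tuple by every
admissible variable mapping. -/
theorem equivD_eq_of_admissible
    {S : Schema} {Var Attr Tuple : Type} [DecidableEq Attr]
    (D : PCSeq S Var Attr) (d : DB S Tuple) (μ : Fin D.m → Var → Tuple)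
    (hadm : D.AdmissibleMap d μ)
    (x y : Fin D.m × Var) (h : D.EquivD x y) :
    μ x.1 x.2 = μ y.1 y.2 := by
  induction h with
  | refl => rfl
  | lift _ hz hw ih => rw [hz.eq_evalPath hadm, hw.eq_evalPath hadm, ih]
  | trans _ _ ih₁ ih₂ => exact ih₁.trans ih₂
end

section
/- In an acyclic schema graph, variable implication yields paths: let D be a sequence of potentially conflicting quadruples over a set of templates P whose schema graph SG is acyclic. For every pair of variables X, Y occurring in the templates of D, if X ⇒^F_D Y then there is a directed path from node type(X) to node type(Y) in SG whose sequence of edge labels is exactly F. -/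
/-- The schema graph is acyclic: there is no non-trivial directed cycle. -/
def SchemaAcyclic (S : Schema) : Prop :=
  ∀ (R : S.Rel) (F : List S.Func), IsPath S R F R → F = []

/-! Each generating step of `⇒_D` is a path in the schema graph: a constraint `Y = f(Z)` is the
edge `f` from `type(Z)` to `type(Y)`, and identifying the variables of a potentially conflicting
quadruple is the empty path, since such variables have the same type. Transitivity is
concatenation of paths. -/

theorem IsPath.append_s14 {S : Schema} {R T U : S.Rel} {F G : List S.Func}
    (hF : IsPath S R F T) (hG : IsPath S T G U) : IsPath S R (F ++ G) U := by
  induction hF with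
  | nil => exact hG
  | cons hdom _ ih => exact .cons hdom (ih hG)

theorem IsPath.singleton {S : Schema} (f : S.Func) : IsPath S (S.dom f) [f] (S.rng f) :=
  .cons rfl (.nil _)

theorem IsPath.nil_of_eq {S : Schema} {R T : S.Rel} (h : R = T) : IsPath S R [] T :=
  h ▸ .nil R

theorem Template.Implies.isPath {S : Schema} {Var Attr : Type}
    {τ : Template S Var Attr} {X Y : Var} {F : List S.Func}
    (h : τ.Implies X F Y) : IsPath S (τ.varType X) F (τ.varType Y) := by
  induction h with
  | refl => exact .nil _
  | step _ hc ih =>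
    obtain ⟨hY, hZ⟩ := τ.eq_typed _ hc
    refine ih.append_s14 ?_
    rw [hY, hZ]
    exact .singleton _

theorem PCSeq.vt_eq_of_mem_quads {S : Schema} {Var Attr : Type} [DecidableEq Attr]
    (D : PCSeq S Var Attr) {q : Fin D.m × ℕ × ℕ × Fin D.m} (hq : q ∈ D.quads)
    {o p : Var × Finset Attr × Finset Attr}
    (ho : (D.tmpl q.1).ops[q.2.1]? = some o) (hp : (D.tmpl q.2.2.2).ops[q.2.2.1]? = some p) :
    D.vt (q.1, o.1) = D.vt (q.2.2.2, p.1) := by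
  obtain ⟨o', p', ho', hp', hconf⟩ := D.wf q hq
  obtain rfl : o = o' := Option.some_injective _ (ho.symm.trans ho')
  obtain rfl : p = p' := Option.some_injective _ (hp.symm.trans hp')
  exact hconf.1

theorem impliesD_isPath_of_acyclic_general
    {S : Schema} {Var Attr : Type} [DecidableEq Attr]
    (D : PCSeq S Var Attr)
    (x y : Fin D.m × Var) (F : List S.Func) (h : D.ImpliesD x F y) :
    IsPath S (D.vt x) F (D.vt y) := by
  induction h with
  | intra h => exact h.isPath
  | cross hq ho hp => exact .nil_of_eq (D.vt_eq_of_mem_quads hq ho hp)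
  | cross' hq ho hp => exact .nil_of_eq (D.vt_eq_of_mem_quads hq ho hp).symm
  | trans _ _ ih₁ ih₂ => exact ih₁.append_s14 ih₂

/-- Over an acyclic schema graph, variable implication yields paths:
if `X ⇒^F_D Y` then `F` labels a directed path from `type(X)` to `type(Y)` in the
schema graph. -/
theorem impliesD_isPath_of_acyclic
    {S : Schema} {Var Attr : Type} [DecidableEq Attr]
    (hacyc : SchemaAcyclic S) (D : PCSeq S Var Attr)
    (x y : Fin D.m × Var) (F : List S.Func) (h : D.ImpliesD x F y) :
    IsPath S (D.vt x) F (D.vt y) :=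
  impliesD_isPath_of_acyclic_general D x y F h
end

section
/- The set {T₁, T₂} consisting of two instantiations of the GoPremium template without functional constraints is not robust against multiversion Read Committed: the schedule U₁[a₁] R₁[s₁] U₂[a₂] R₂[s₁] U₂[s₁] C₂ U₁[s₁] C₁, where R₁[s₁] reads attribute I written by U₂[s₁] and U₂[s₁], U₁[s₁] both write attribute I, is allowed under RC (read-last-committed and no dirty writes) but not conflict serializable. -/
namespace Workload

variable {Tuple Attr Txn : Type} [DecidableEq Attr]

/-- Read-last-committed: the version order corresponds to the commit order, and every
read operation observes the most recently committed version of its tuple. -/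
def Schedule.RLC {W : Workload Tuple Attr Txn} (s : Schedule W) : Prop :=
  (∀ b a : W.Op, b.tuple = a.tuple → b.ws.Nonempty → a.ws.Nonempty →
      (s.vlt b a ↔ s.lt (Event.commit b.1) (Event.op a))) ∧
  (∀ a : W.Op, a.rs.Nonempty →
      (s.version a = none ∨
        ∃ w, s.version a = some w ∧ s.lt (Event.commit w.1) (Event.op a)) ∧
      (∀ c : W.Op, c.tuple = a.tuple → c.ws.Nonempty →
        s.lt (Event.commit c.1) (Event.op a) → ¬ s.vlt0 (s.version a) c))

/-- A dirty write: a transaction writes to an attribute of a tuple modified earlier by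
another transaction that has not yet committed. -/
def Schedule.DirtyWrite {W : Workload Tuple Attr Txn} (s : Schedule W) : Prop :=
  ∃ b a : W.Op, wwConflict b a ∧ s.lt (Event.op b) (Event.op a) ∧
    s.lt (Event.op a) (Event.commit b.1)

/-- A schedule is allowed under multiversion Read Committed if it is
read-last-committed and exhibits no dirty writes. -/
def Schedule.AllowedRC {W : Workload Tuple Attr Txn} (s : Schedule W) : Prop :=
  s.RLC ∧ ¬ s.DirtyWrite

/-- A set of transactions is robust against RC if every schedule allowed under RC
is conflict serializable. -/
def Robust (W : Workload Tuple Attr Txn) : Prop :=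
  ∀ s : Schedule W, s.AllowedRC → s.ConflictSerializable

end Workload

/-! ## The GoPremium example (without functional constraints).

Tuples: `0 = a₁`, `1 = a₂`, `2 = s₁` (two Account tuples and one Savings tuple).
Attributes: `0 = N`, `1 = C`, `2 = I`.  An instantiation of GoPremium on Account tuple
`a` and Savings tuple `s₁` is `U[a {N,C}{I}] R[s₁ {C,I}] U[s₁ {C}{I}]`. -/

/-- The GoPremium instantiation updating Account tuple `a` and Savings tuple `s₁ = 2`. -/
def goPremium (a : Fin 3) : List (Oper (Fin 3) (Fin 3)) :=
  [⟨a, {0, 1}, {2}⟩, ⟨2, {1, 2}, ∅⟩, ⟨2, {1}, {2}⟩]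

/-- The workload `{T₁, T₂}`: two instantiations of GoPremium (with `X` mapped to `a₁`
resp. `a₂` and `Y` mapped to `s₁` in both), as obtained when functional constraints are
ignored. -/
def goPremiumW : Workload (Fin 3) (Fin 3) (Fin 2) :=
  ⟨fun T => if T = 0 then goPremium 0 else goPremium 1⟩

/-- The position of each event in the schedule
`U₁[a₁] R₁[s₁] U₂[a₂] R₂[s₁] U₂[s₁] C₂ U₁[s₁] C₁`. -/
def goPremiumPos : Workload.Event goPremiumW → ℕ
  | .commit T => if T = 0 then 7 else 5
  | .op a =>
      if a.1 = 0 then (if (a.2 : ℕ) = 0 then 0 else if (a.2 : ℕ) = 1 then 1 else 6)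
      else 2 + (a.2 : ℕ)

namespace GoPremiumProof
open Workload

instance : DecidableEq goPremiumW.Op :=
  inferInstanceAs (DecidableEq (Σ T : Fin 2, Fin (goPremiumW.prog T).length))
instance : Fintype goPremiumW.Op :=
  inferInstanceAs (Fintype (Σ T : Fin 2, Fin (goPremiumW.prog T).length))

instance (b a : goPremiumW.Op) : Decidable (wwConflict b a) := by
  unfold wwConflict; infer_instance
instance (b a : goPremiumW.Op) : Decidable (wrConflict b a) := by
  unfold wrConflict; infer_instance
instance (b a : goPremiumW.Op) : Decidable (rwConflict b a) := by
  unfold rwConflict; infer_instance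
instance (b a : goPremiumW.Op) : Decidable (conflict b a) := by
  unfold conflict; infer_instance

/-- Shorthand for the `j`-th operation of transaction `T`. -/
def mk (T : Fin 2) (j : Fin 3) : goPremiumW.Op :=
  ⟨T, ⟨j, by fin_cases T <;> exact j.isLt⟩⟩

lemma op_cases_on (a : goPremiumW.Op) :
    a = mk 0 0 ∨ a = mk 0 1 ∨ a = mk 0 2 ∨ a = mk 1 0 ∨ a = mk 1 1 ∨ a = mk 1 2 := by
  revert a; decide

/-- The version function of the schedule. -/
def ver (a : goPremiumW.Op) : Option goPremiumW.Op :=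
  if a = mk 0 2 then some (mk 1 2) else none

/-- The version order of the schedule. -/
def vord (b a : goPremiumW.Op) : Prop :=
  b.ws.Nonempty ∧ a.ws.Nonempty ∧ b.tuple = a.tuple ∧
    goPremiumPos (.commit b.1) < goPremiumPos (.op a)

instance (b a : goPremiumW.Op) : Decidable (vord b a) := by
  unfold vord; infer_instance

lemma pos_inj : ∀ e f : Event goPremiumW, goPremiumPos e = goPremiumPos f → e = f := by
  intro e f
  cases e with
  | op a =>
    cases f with
    | op b =>
      rcases op_cases_on a with rfl|rfl|rfl|rfl|rfl|rfl <;>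
        rcases op_cases_on b with rfl|rfl|rfl|rfl|rfl|rfl <;>
        intro h <;> first | rfl | exact absurd h (by decide)
    | commit T =>
      rcases op_cases_on a with rfl|rfl|rfl|rfl|rfl|rfl <;> fin_cases T <;>
        intro h <;> exact absurd h (by decide)
  | commit T =>
    cases f with
    | op b =>
      rcases op_cases_on b with rfl|rfl|rfl|rfl|rfl|rfl <;> fin_cases T <;>
        intro h <;> exact absurd h (by decide)
    | commit T' =>
      fin_cases T <;> fin_cases T' <;> intro h <;> first | rfl | exact absurd h (by decide)

lemma op_lt_commit (a : goPremiumW.Op) :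
    goPremiumPos (.op a) < goPremiumPos (.commit a.1) := by
  rcases op_cases_on a with rfl|rfl|rfl|rfl|rfl|rfl <;> decide

/-- The schedule `U₁[a₁] R₁[s₁] U₂[a₂] R₂[s₁] U₂[s₁] C₂ U₁[s₁] C₁`. -/
def S : Schedule goPremiumW where
  lt e f := goPremiumPos e < goPremiumPos f
  lt_irrefl e := Nat.lt_irrefl _
  lt_trans := Nat.lt_trans
  lt_total e f := by
    rcases Nat.lt_trichotomy (goPremiumPos e) (goPremiumPos f) with h|h|h
    · exact Or.inr (Or.inl h)
    · exact Or.inl (pos_inj e f h)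
    · exact Or.inr (Or.inr h)
  prog_order a b h := by
    rcases op_cases_on a with rfl|rfl|rfl|rfl|rfl|rfl <;>
      rcases op_cases_on b with rfl|rfl|rfl|rfl|rfl|rfl <;>
      first | decide | exact absurd h (by decide)
  commit_after a := by
    rcases op_cases_on a with rfl|rfl|rfl|rfl|rfl|rfl <;> decide
  version := ver
  version_write a w h := by
    unfold ver at h
    split at h
    · next ha =>
      subst ha
      obtain rfl : w = mk 1 2 := (Option.some.injEq _ _ ▸ h).symm
      refine ⟨by decide, by decide, by decide, by decide⟩
    · exact absurd h (by simp)
  vlt := vord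
  vlt_write h := ⟨h.2.2.1, h.1, h.2.1⟩
  vlt_irrefl a h := absurd h.2.2.2 (Nat.not_lt.2 (Nat.le_of_lt (op_lt_commit a)))
  vlt_trans := by
    rintro a b c ⟨ha, hb, ht, h1⟩ ⟨_, hc, ht', h2⟩
    exact ⟨ha, hc, ht.trans ht', h1.trans ((op_lt_commit b).trans h2)⟩
  vlt_total a b := by
    rcases op_cases_on a with rfl|rfl|rfl|rfl|rfl|rfl <;>
      rcases op_cases_on b with rfl|rfl|rfl|rfl|rfl|rfl <;>
      intro h1 h2 h3 <;>
      first | decide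
            | exact absurd h1 (by decide)
            | exact absurd h2 (by decide)
            | exact absurd h3 (by decide)

lemma S_lt_iff (e f : Event goPremiumW) : S.lt e f ↔ goPremiumPos e < goPremiumPos f :=
  Iff.rfl

instance (e f : Event goPremiumW) : Decidable (S.lt e f) :=
  decidable_of_iff _ (S_lt_iff e f).symm

lemma S_vlt_iff (b a : goPremiumW.Op) : S.vlt b a ↔ vord b a := Iff.rfl

instance (b a : goPremiumW.Op) : Decidable (S.vlt b a) :=
  decidable_of_iff _ (S_vlt_iff b a).symm

lemma S_version_eq (a : goPremiumW.Op) : S.version a = ver a := rfl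

instance (o : Option goPremiumW.Op) (a : goPremiumW.Op) : Decidable (S.vlt0 o a) :=
  match o with
  | none => isTrue trivial
  | some w => decidable_of_iff (S.vlt w a) Iff.rfl

lemma S_allowed : S.AllowedRC := by
  refine ⟨⟨?_, ?_⟩, ?_⟩
  · decide
  · decide
  · unfold Schedule.DirtyWrite; decide

lemma rw_dep : S.dep (mk 0 1) (mk 1 2) :=
  Or.inr (Or.inr ⟨by decide, by decide⟩)

lemma ww_dep : S.dep (mk 1 2) (mk 0 2) :=
  Or.inl ⟨by decide, by decide⟩

/-- In a single version schedule, a dependency `b →ₛ a` between operations of distinct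
transactions forces `b` to precede `a`. -/
lemma dep_lt {s' : Schedule goPremiumW} (hSV : s'.SingleVersion)
    {b a : goPremiumW.Op} (hd : s'.dep b a) : s'.lt (.op b) (.op a) := by
  obtain ⟨hvlt_iff, hread⟩ := hSV
  rcases hd with ⟨⟨ht, hne, hws⟩, hv⟩ | ⟨⟨ht, hne, hws⟩, hv⟩ | ⟨⟨ht, hne, hws⟩, hv⟩
  · obtain ⟨ht', hwb, hwa⟩ := s'.vlt_write hv
    exact (hvlt_iff b a ht' hwb hwa).1 hv
  · rcases hv with hv | ⟨w, hw, hbw⟩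
    · exact (s'.version_write a b hv).2.2.2
    · obtain ⟨htw, hwb', hww⟩ := s'.vlt_write hbw
      exact s'.lt_trans ((hvlt_iff b w htw hwb' hww).1 hbw) (s'.version_write a w hw).2.2.2
  · obtain ⟨x, hx⟩ := hws
    have hrs : b.rs.Nonempty := ⟨x, (Finset.mem_inter.1 hx).1⟩
    have haws : a.ws.Nonempty := ⟨x, (Finset.mem_inter.1 hx).2⟩
    rcases s'.lt_total (.op b) (.op a) with heq | h | h
    · exact absurd (congrArg Sigma.fst (Workload.Event.op.inj heq)) hne
    · exact h
    · exfalso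
      have hnot := hread b a hrs ht.symm haws h
      cases hver : s'.version b with
      | none => exact hnot (Or.inl hver)
      | some w =>
        rw [hver] at hv
        have hv' : s'.vlt w a := hv
        obtain ⟨htw, hwb', hww⟩ := s'.vlt_write hv'
        exact hnot (Or.inr ⟨w, hver, (hvlt_iff w a htw hwb' hww).1 hv'⟩)

lemma S_not_serializable : ¬ S.ConflictSerializable := by
  rintro ⟨s', hSV, hSer, hEq⟩
  have h1 : s'.lt (.op (mk 0 1)) (.op (mk 1 2)) :=
    dep_lt hSV ((hEq _ _ (by decide)).1 rw_dep)
  have h2 : s'.lt (.op (mk 1 2)) (.op (mk 0 2)) :=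
    dep_lt hSV ((hEq _ _ (by decide)).1 ww_dep)
  exact absurd (hSer _ _ _ h1 h2 rfl) (by decide)

end GoPremiumProof

open Workload in
/-- The set `{T₁, T₂}` of two instantiations of GoPremium without
functional constraints is not robust against multiversion Read Committed: the schedule
`U₁[a₁] R₁[s₁] U₂[a₂] R₂[s₁] U₂[s₁] C₂ U₁[s₁] C₁` is allowed under RC (read-last-committed
and no dirty writes) but not conflict serializable. -/
theorem goPremium_not_robust :
    ¬ Robust goPremiumW ∧
    ∃ s : Schedule goPremiumW,
      (∀ e f : Event goPremiumW, s.lt e f ↔ goPremiumPos e < goPremiumPos f) ∧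
      s.AllowedRC ∧ ¬ s.ConflictSerializable := by
  refine ⟨fun hR => GoPremiumProof.S_not_serializable (hR _ GoPremiumProof.S_allowed),
    GoPremiumProof.S, fun e f => Iff.rfl, GoPremiumProof.S_allowed,
    GoPremiumProof.S_not_serializable⟩
end
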